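/- For any simplicial complex $\mathcal{K}$ on $[m]$ (without ghost vertices) and any field $\mathbf{k}$, the formal power series $\mathrm{b}_{\mathbf{k}[\mathcal{K}]}(x_1,\dots,x_m,z) := \prod_{i=1}^m (1+x_i z) / \mathrm{P}_{\mathbf{k}[\mathcal{K}]}(x,z)$ satisfies $\mathrm{b}_{\mathbf{k}[\mathcal{K}]}(x,z) = \sum_{J \subseteq [m]} b_{\mathcal{K}_J,\mathbf{k}}(z) x^J$, where $b_{\mathcal{K}_J,\mathbf{k}}(z)$ is the coefficient of $x^J$ in $\mathrm{b}_{\mathbf{k}[\mathcal{K}_J]}$, i.e. the coefficient of the top square-free multidegree depends only on the full subcomplex $\mathcal{K}_J$. -/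

import Mathlib

/-- `K` is an abstract simplicial complex on the vertex type `V`. -/
def IsComplexOn {V : Type} (K : Set (Finset V)) : Prop :=
  ∅ ∈ K ∧ ∀ s ∈ K, ∀ t, t ⊆ s → t ∈ K

/-- Merge the entries in positions `i` and `i + 1` of a list (used to define the bar
differential via multiplication of adjacent monomials, recorded additively on
exponent vectors). -/
def mergeList {M : Type} [Add M] : ℕ → List M → List M
  | 0, a :: b :: l => (a + b) :: l
  | i + 1, a :: l => a :: mergeList i l
  | _, l => l

/-- The basis of the multidegree-`α` component of the `n`-th term of the reduced bar
construction of the Stanley--Reisner ring `k[K]`: lists of `n` nonzero monomials (exponent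
vectors) whose supports are faces of `K` and whose multidegrees sum to `α`.  (A monomial
of multidegree `β` has internal degree `2β` in `k[K]`; we record half the internal
multidegree throughout.) -/
def BarBasis {V : Type} (K : Set (Finset V)) (α : V →₀ ℕ) (n : ℕ) : Type :=
  { l : List (V →₀ ℕ) //
      l.length = n ∧ (∀ m ∈ l, m ≠ 0 ∧ m.support ∈ K) ∧ l.sum = α }

/-- The multidegree-`α` component of the `n`-th term of the reduced bar construction. -/
abbrev BarChains (k : Type) [Field k] {V : Type} (K : Set (Finset V)) (α : V →₀ ℕ)
    (n : ℕ) : Type :=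
  BarBasis K α n →₀ k

open Classical in
/-- Send a list to the corresponding basis element if it is admissible, and to `0`
otherwise (monomials whose support is not a face vanish in `k[K]`). -/
noncomputable def barProj (k : Type) [Field k] {V : Type} (K : Set (Finset V))
    (α : V →₀ ℕ) (n : ℕ) (l : List (V →₀ ℕ)) : BarChains k K α n :=
  if h : l.length = n ∧ (∀ m ∈ l, m ≠ 0 ∧ m.support ∈ K) ∧ l.sum = α then
    Finsupp.single ⟨l, h⟩ 1
  else 0

/-- The bar differential `d : B_{n+1} → B_n` in multidegree `α`. -/
noncomputable def barD (k : Type) [Field k] {V : Type} (K : Set (Finset V))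
    (α : V →₀ ℕ) (n : ℕ) :
    BarChains k K α (n + 1) →ₗ[k] BarChains k K α n :=
  Finsupp.lift (BarChains k K α n) k (BarBasis K α (n + 1)) fun l =>
    ∑ i ∈ Finset.range n, ((-1 : k) ^ (i + 1)) • barProj k K α n (mergeList i l.1)

/-- The cycles of the bar complex. -/
noncomputable def barCycles (k : Type) [Field k] {V : Type} (K : Set (Finset V))
    (α : V →₀ ℕ) : (n : ℕ) → Submodule k (BarChains k K α n)
  | 0 => ⊤
  | n + 1 => LinearMap.ker (barD k K α n)


/-- Quotient instance for homology of the bar complex. -/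
noncomputable instance barQuot (k : Type) [Field k] {V : Type} (K : Set (Finset V))
    (α : V →₀ ℕ) (n : ℕ) :
    HasQuotient (↥(barCycles k K α n)) (Submodule k ↥(barCycles k K α n)) :=
  Submodule.hasQuotient (R := k) (M := ↥(barCycles k K α n))

/-- The multigraded Tor group `Tor^{k[K]}_{n,2α}(k,k)`, computed as the homology of the
multidegree-`α` component of the reduced bar construction of `k[K]`. -/
abbrev TorSR (k : Type) [Field k] {V : Type} (K : Set (Finset V)) (α : V →₀ ℕ)
    (n : ℕ) : Type :=
  ↥(barCycles k K α n) ⧸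
    Submodule.comap (barCycles k K α n).subtype (LinearMap.range (barD k K α n))


/-- The multigraded Poincaré series `P_{k[K]}(x₁,…,x_m,z)` of `Tor^{k[K]}(k,k)`, an element
of `ℤ[[x₁,…,x_m]][[z]]`: the coefficient of `x^α` is the power series in `z` recording the
dimensions of `Tor^{k[K]}_{n,2α}(k,k)`. -/
noncomputable def torPoincare (m : ℕ) (K : Set (Finset (Fin m))) (k : Type) [Field k] :
    MvPowerSeries (Fin m) (PowerSeries ℤ) :=
  fun α => PowerSeries.mk fun n => (Module.finrank k (TorSR k K α n) : ℤ)

/-- The Backelin--Berglund series `b_{k[K]}(x,z) := ∏ᵢ(1 + xᵢz) / P_{k[K]}(x,z)`. -/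
noncomputable def bSeries (m : ℕ) (K : Set (Finset (Fin m))) (k : Type) [Field k] :
    MvPowerSeries (Fin m) (PowerSeries ℤ) :=
  (∏ i : Fin m, (1 + MvPowerSeries.X i * MvPowerSeries.C (σ := Fin m) (R := PowerSeries ℤ) PowerSeries.X))
    * MvPowerSeries.invOfUnit (torPoincare m K k) 1

/-
In multidegree `α` the bar complex of `k[K]` only sees the faces of `K` contained in
`supp α`, since every monomial of an admissible list divides `x^α`. Hence `Tor_{n,2α}` and the
coefficient of `x^α` in `P_{k[K]}` depend only on `K_{supp α}`. The coefficient of `x^γ` in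
`b_{k[K]} = ∏ᵢ(1 + xᵢz) · P_{k[K]}⁻¹` only involves coefficients of `P_{k[K]}` in multidegrees
`β ≤ γ`, and for `γ = x^J` these have `supp β ⊆ J`, where `K` and `K_J` have the same faces.
-/

namespace Submodule

variable {R M N : Type*} [Ring R] [AddCommGroup M] [Module R M] [AddCommGroup N] [Module R N]

noncomputable def subquotientCongr (e : M ≃ₗ[R] N) {p q : Submodule R M}
    {p' q' : Submodule R N} (hp : p.map e.toLinearMap = p') (hq : q.map e.toLinearMap = q') :
    (p ⧸ q.comap p.subtype) ≃ₗ[R] p' ⧸ q'.comap p'.subtype :=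
  Quotient.equiv _ _ ((e.submoduleMap p).trans (LinearEquiv.ofEq _ _ hp)) (by
    subst hp hq
    ext ⟨x, hx⟩
    simp)

end Submodule

section CommSquare

variable {R M₀ M₁ N₀ N₁ : Type*} [Semiring R] [AddCommMonoid M₀] [Module R M₀] [AddCommMonoid M₁]
  [Module R M₁] [AddCommMonoid N₀] [Module R N₀] [AddCommMonoid N₁] [Module R N₁]
  {e₀ : M₀ ≃ₗ[R] N₀} {e₁ : M₁ ≃ₗ[R] N₁} {d : M₁ →ₗ[R] M₀} {d' : N₁ →ₗ[R] N₀}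

lemma map_ker_of_comp_eq (h : e₀.toLinearMap ∘ₗ d = d' ∘ₗ e₁.toLinearMap) :
    (LinearMap.ker d).map e₁.toLinearMap = LinearMap.ker d' := by
  rw [← LinearEquiv.ker_comp e₀ d, h, LinearMap.ker_comp,
    Submodule.map_comap_eq_of_surjective e₁.surjective]

lemma map_range_of_comp_eq (h : e₀.toLinearMap ∘ₗ d = d' ∘ₗ e₁.toLinearMap) :
    (LinearMap.range d).map e₀.toLinearMap = LinearMap.range d' := by
  rw [← LinearMap.range_comp, h, LinearEquiv.range_comp]

end CommSquare

section BarTransport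

variable {V : Type} {K K' : Set (Finset V)} {α : V →₀ ℕ}

lemma barBasis_pred_iff (hKK' : ∀ s ⊆ α.support, s ∈ K ↔ s ∈ K') (n : ℕ) (l : List (V →₀ ℕ)) :
    (l.length = n ∧ (∀ m ∈ l, m ≠ 0 ∧ m.support ∈ K) ∧ l.sum = α) ↔
      (l.length = n ∧ (∀ m ∈ l, m ≠ 0 ∧ m.support ∈ K') ∧ l.sum = α) := by
  refine and_congr_right fun _ => ⟨fun ⟨hl, hsum⟩ => ⟨fun f hf => ?_, hsum⟩,
    fun ⟨hl, hsum⟩ => ⟨fun f hf => ?_, hsum⟩⟩ <;>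
  · have hsupp : f.support ⊆ α.support := hsum ▸ Finsupp.support_mono (List.le_sum_of_mem hf)
    exact ⟨(hl f hf).1, by simpa [hKK' _ hsupp] using (hl f hf).2⟩

variable (hKK' : ∀ s ⊆ α.support, s ∈ K ↔ s ∈ K') (k : Type) [Field k]

def barBasisEquiv (n : ℕ) : BarBasis K α n ≃ BarBasis K' α n :=
  Equiv.subtypeEquivRight (barBasis_pred_iff hKK' n)

noncomputable def barChainsEquiv (n : ℕ) : BarChains k K α n ≃ₗ[k] BarChains k K' α n :=
  Finsupp.domLCongr (barBasisEquiv hKK' n)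

lemma barChainsEquiv_barProj (n : ℕ) (l : List (V →₀ ℕ)) :
    barChainsEquiv hKK' k n (barProj k K α n l) = barProj k K' α n l := by
  unfold barProj
  by_cases hl : l.length = n ∧ (∀ m ∈ l, m ≠ 0 ∧ m.support ∈ K) ∧ l.sum = α
  · rw [dif_pos hl, dif_pos ((barBasis_pred_iff hKK' n l).mp hl)]
    exact Finsupp.domLCongr_single _ _ _
  · rw [dif_neg hl, dif_neg (mt (barBasis_pred_iff hKK' n l).mpr hl), map_zero]

lemma barChainsEquiv_comp_barD (n : ℕ) :
    (barChainsEquiv hKK' k n).toLinearMap ∘ₗ barD k K α n =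
      barD k K' α n ∘ₗ (barChainsEquiv hKK' k (n + 1)).toLinearMap := by
  refine Finsupp.lhom_ext fun l c => ?_
  simp only [LinearMap.coe_comp, Function.comp_apply, LinearEquiv.coe_coe, barChainsEquiv,
    Finsupp.domLCongr_single, barD, Finsupp.lift_apply]
  rw [Finsupp.sum_single_index (by simp), Finsupp.sum_single_index (by simp), map_smul, map_sum]
  congr 1
  refine Finset.sum_congr rfl fun i _ => ?_
  rw [map_smul, ← barChainsEquiv, barChainsEquiv_barProj]
  rfl

lemma map_barCycles (n : ℕ) :
    (barCycles k K α n).map (barChainsEquiv hKK' k n).toLinearMap = barCycles k K' α n := by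
  cases n with
  | zero => exact (Submodule.map_top _).trans (LinearEquiv.range _)
  | succ n => exact map_ker_of_comp_eq (barChainsEquiv_comp_barD hKK' k n)

noncomputable def torSREquiv (n : ℕ) : TorSR k K α n ≃ₗ[k] TorSR k K' α n :=
  Submodule.subquotientCongr (barChainsEquiv hKK' k n) (map_barCycles hKK' k n)
    (map_range_of_comp_eq (barChainsEquiv_comp_barD hKK' k n))

end BarTransport

lemma coeff_torPoincare_congr {m : ℕ} {K K' : Set (Finset (Fin m))} (k : Type) [Field k]
    {β : Fin m →₀ ℕ} (hKK' : ∀ s ⊆ β.support, s ∈ K ↔ s ∈ K') :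
    MvPowerSeries.coeff β (torPoincare m K k) = MvPowerSeries.coeff β (torPoincare m K' k) :=
  PowerSeries.ext fun n => by
    simp [torPoincare, MvPowerSeries.coeff_apply, (torSREquiv hKK' k n).finrank_eq]

namespace MvPowerSeries

variable {σ R : Type*} {φ ψ : MvPowerSeries σ R} {q : σ →₀ ℕ}

lemma coeff_invOfUnit_congr [Ring R] (u : Rˣ) (h : ∀ β ≤ q, coeff β φ = coeff β ψ) :
    coeff q (φ.invOfUnit u) = coeff q (ψ.invOfUnit u) := by
  classical
  induction q using WellFoundedLT.induction with
  | _ q ih =>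
  rw [coeff_invOfUnit, coeff_invOfUnit]
  refine if_ctx_congr Iff.rfl (fun _ => rfl) fun _ => congrArg _ (Finset.sum_congr rfl ?_)
  intro x hx
  have hsum : x.1 + x.2 = q := Finset.HasAntidiagonal.mem_antidiagonal.mp hx
  refine if_ctx_congr Iff.rfl (fun hlt => ?_) fun _ => rfl
  rw [h _ (hsum ▸ le_self_add), ih _ hlt fun β hβ => h β (hβ.trans (hsum ▸ le_add_self))]

lemma coeff_mul_congr_right [Semiring R] (χ : MvPowerSeries σ R)
    (h : ∀ β ≤ q, coeff β φ = coeff β ψ) : coeff q (χ * φ) = coeff q (χ * ψ) := by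
  classical
  rw [coeff_mul, coeff_mul]
  refine Finset.sum_congr rfl fun x hx => ?_
  rw [h _ (Finset.HasAntidiagonal.mem_antidiagonal.mp hx ▸ le_add_self)]

end MvPowerSeries

theorem stmt3_general (m : ℕ) (K : Set (Finset (Fin m))) (k : Type) [Field k] (J : Finset (Fin m)) :
    MvPowerSeries.coeff (R := PowerSeries ℤ) (∑ j ∈ J, Finsupp.single j 1) (bSeries m K k) =
      MvPowerSeries.coeff (R := PowerSeries ℤ) (∑ j ∈ J, Finsupp.single j 1)
        (bSeries m {s ∈ K | s ⊆ J} k) := by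
  classical
  have hJ : (∑ j ∈ J, Finsupp.single j 1 : Fin m →₀ ℕ).support ⊆ J :=
    Finsupp.support_finsetSum.trans (by simp)
  refine MvPowerSeries.coeff_mul_congr_right _ fun β hβ =>
    MvPowerSeries.coeff_invOfUnit_congr _ fun β' hβ' =>
    coeff_torPoincare_congr k fun s hs => ?_
  have hsJ : s ⊆ J := hs.trans ((Finsupp.support_mono (hβ'.trans hβ)).trans hJ)
  simp [hsJ]

/-- For any simplicial complex `K` on `[m]` without ghost vertices and any field `k`, the
coefficient of the top square-free multidegree `x^J` in
`b_{k[K]}(x,z) = ∏ᵢ(1 + xᵢz)/P_{k[K]}(x,z)` depends only on the full subcomplex `K_J`,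
i.e. `b_{k[K]}(x,z) = ∑_{J ⊆ [m]} b_{K_J,k}(z)·x^J` where `b_{K_J,k}(z)` is the
coefficient of `x^J` in `b_{k[K_J]}`. -/
theorem stmt3 (m : ℕ) (K : Set (Finset (Fin m))) (hK : IsComplexOn K)
    (hng : ∀ i : Fin m, {i} ∈ K) (k : Type) [Field k] (J : Finset (Fin m)) :
    MvPowerSeries.coeff (R := PowerSeries ℤ) (∑ j ∈ J, Finsupp.single j 1) (bSeries m K k) =
      MvPowerSeries.coeff (R := PowerSeries ℤ) (∑ j ∈ J, Finsupp.single j 1)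
        (bSeries m {s ∈ K | s ⊆ J} k) :=
  stmt3_general m K k J
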